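/- Let L₁ ⊆ ℤⁿ be an integer lattice of the 'NO-instance' type: every nonzero v ∈ L₁ has at least d nonzero coordinates, or all coordinates of v are even and at least d/4 are nonzero, or all coordinates of v are even and ‖v‖₂ ≥ d. Then for any lattice L₂, λ₁(L₁ ⊗ L₂) ≥ √d · λ₁(L₂). -/

import Mathlib

open Matrix Kronecker
open scoped ENNReal

noncomputable def lambdaOne (p : ℝ≥0∞) {n m : Type} [Fintype n] [Fintype m]
    (B : Matrix n m ℝ) : ℝ :=
  sInf {t : ℝ | ∃ x : m → ℤ, B.mulVec (fun j => (x j : ℝ)) ≠ 0 ∧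
    t = ‖(WithLp.equiv p (n → ℝ)).symm (B.mulVec (fun j => (x j : ℝ)))‖}

/-!
Write a vector of `L₁ ⊗ L₂` as `Y = B₂ Cᵀ`, where `C` is an integer matrix whose columns lie in
`L₁`; then `‖Y‖² = ∑ᵢ ‖B₂ cᵢ‖²` over the rows `cᵢ` of `C`, and every nonzero row contributes at
least `λ₁(L₂)²`. Let `t` be the number of nonzero rows. If `t ≥ d` we are done. Otherwise every
vector of the column span of `C` has fewer than `d` nonzero coordinates, so by the NO condition it
is even: the nonzero rows are twice integer vectors and contribute `4 λ₁(L₂)²` each, which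
suffices when `4t ≥ d`. If `4t < d`, every nonzero vector of the column span has norm at least `d`.
Factor `C = G A` through a basis `G` of the column span, of rank `ρ ≤ t`, and put `W = B₂ Aᵀ`.
Then `‖Y‖² = tr (GᵀG · WᵀW)`, Minkowski's theorem gives `det (GᵀG) ≥ (d² / ρ)^ρ` and
`det (WᵀW) ≥ (λ₁(L₂)² / ρ)^ρ`, and AM–GM on the eigenvalues of the product yields
`‖Y‖² ≥ d² λ₁(L₂)² / ρ ≥ d λ₁(L₂)²`.
-/

open Finset Function MeasureTheory

theorem Real.prod_le_sum_div_card_pow {ι : Type*} [Fintype ι] {f : ι → ℝ} (hf : ∀ i, 0 ≤ f i) :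
    ∏ i, f i ≤ ((∑ i, f i) / Fintype.card ι) ^ Fintype.card ι := by
  rcases isEmpty_or_nonempty ι with hι | hι
  · simp
  set N := Fintype.card ι
  have hN : (N : ℝ) ≠ 0 := by positivity
  have hprod : 0 ≤ ∏ i, f i := prod_nonneg fun i _ => hf i
  have hamgm := Real.geom_mean_le_arith_mean_weighted univ (fun _ => (N : ℝ)⁻¹) f
    (fun _ _ => by positivity) (by simp [N, hN]) fun i _ => hf i
  rw [Real.finsetProd_rpow _ _ fun i _ => hf i, ← mul_sum, inv_mul_eq_div] at hamgm
  calc ∏ i, f i = ((∏ i, f i) ^ (N : ℝ)⁻¹) ^ N := by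
        rw [← Real.rpow_natCast, ← Real.rpow_mul hprod, inv_mul_cancel₀ hN, Real.rpow_one]
    _ ≤ ((∑ i, f i) / N) ^ N := by gcongr

namespace Matrix

variable {ι κ : Type*}

theorem dotProduct_self_nonneg [Fintype ι] {R : Type*} [CommRing R] [LinearOrder R]
    [IsStrictOrderedRing R] (v : ι → R) : 0 ≤ v ⬝ᵥ v :=
  sum_nonneg fun i _ => mul_self_nonneg (v i)

theorem dotProduct_transpose_mul_self_mulVec [Fintype ι] [Fintype κ] {R : Type*} [CommSemiring R]
    (S : Matrix κ ι R) (v : ι → R) : v ⬝ᵥ (Sᵀ * S) *ᵥ v = (S *ᵥ v) ⬝ᵥ (S *ᵥ v) := by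
  rw [← mulVec_mulVec, dotProduct_mulVec, vecMul_transpose]

theorem posDef_transpose_mul_self [Fintype ι] [Fintype κ] {S : Matrix κ ι ℝ}
    (hS : Injective S.mulVec) : (Sᵀ * S).PosDef := by
  simpa only [conjTranspose_eq_transpose_of_trivial] using PosDef.conjTranspose_mul_self S hS

section PositiveDefinite

variable [Fintype ι] [DecidableEq ι]

theorem PosSemidef.det_le_trace_div_card_pow {A : Matrix ι ι ℝ} (hA : A.PosSemidef) :
    A.det ≤ (A.trace / Fintype.card ι) ^ Fintype.card ι := by
  rw [hA.1.det_eq_prod_eigenvalues, hA.1.trace_eq_sum_eigenvalues]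
  exact_mod_cast Real.prod_le_sum_div_card_pow hA.eigenvalues_nonneg

open scoped MatrixOrder in
theorem PosSemidef.det_mul_det_le_trace_mul_div_card_pow {A B : Matrix ι ι ℝ}
    (hA : A.PosSemidef) (hB : B.PosSemidef) :
    A.det * B.det ≤ ((A * B).trace / Fintype.card ι) ^ Fintype.card ι := by
  obtain ⟨P, rfl⟩ := CStarAlgebra.nonneg_iff_eq_star_mul_self.mp hA.nonneg
  convert (hB.mul_mul_conjTranspose_same P).det_le_trace_div_card_pow using 2
  · simp only [det_mul, star_eq_conjTranspose, det_conjTranspose, star_trivial]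
    ring
  · rw [star_eq_conjTranspose, Matrix.mul_assoc, trace_mul_comm, Matrix.mul_assoc]

open scoped MatrixOrder in
theorem PosSemidef.trace_mul_nonneg {A B : Matrix ι ι ℝ} (hA : A.PosSemidef)
    (hB : B.PosSemidef) : 0 ≤ (A * B).trace := by
  obtain ⟨P, rfl⟩ := CStarAlgebra.nonneg_iff_eq_star_mul_self.mp hA.nonneg
  rw [star_eq_conjTranspose, Matrix.mul_assoc, trace_mul_comm]
  exact (hB.mul_mul_conjTranspose_same P).trace_nonneg

theorem volume_preimage_toLin'_pi_Ioo (S : Matrix ι ι ℝ) (hS : S.det ≠ 0) {a : ℝ} (ha : 0 < a) :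
    volume (toLin' S ⁻¹' Set.univ.pi fun _ => Set.Ioo (-a) a) =
      ENNReal.ofReal ((2 * a) ^ Fintype.card ι / |S.det|) := by
  rw [Measure.addHaar_preimage_linearMap _ (by rwa [LinearMap.det_toLin']),
    LinearMap.det_toLin', volume_pi_pi]
  simp only [Real.volume_Ioo, prod_const, card_univ]
  rw [sub_neg_eq_add, ← two_mul, ← ENNReal.ofReal_pow (by positivity),
    ← ENNReal.ofReal_mul (abs_nonneg _), abs_inv, inv_mul_eq_div]

/-- Minkowski's theorem on linear forms. -/
theorem exists_int_ne_zero_forall_abs_mulVec_lt (S : Matrix ι ι ℝ) (hS : S.det ≠ 0) {a : ℝ}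
    (ha : 0 < a) (hdet : |S.det| < a ^ Fintype.card ι) :
    ∃ z : ι → ℤ, z ≠ 0 ∧ ∀ i, |(S *ᵥ fun j => (z j : ℝ)) i| < a := by
  have : Countable (Submodule.span ℤ (Set.range (Pi.basisFun ℝ ι))).toAddSubgroup :=
    inferInstanceAs (Countable (Submodule.span ℤ (Set.range (Pi.basisFun ℝ ι))))
  set s := toLin' S ⁻¹' Set.univ.pi fun _ => Set.Ioo (-a) a
  have hsymm : ∀ x ∈ s, -x ∈ s := by
    intro x hx
    simp only [s, Set.mem_preimage, map_neg, Set.mem_pi, Set.mem_univ, Set.mem_Ioo,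
      forall_const, Pi.neg_apply] at hx ⊢
    exact fun i => ⟨neg_lt_neg (hx i).2, by linarith [(hx i).1]⟩
  have hconv : Convex ℝ s :=
    (convex_pi fun _ _ => convex_Ioo (-a) a).linear_preimage (toLin' S)
  have hbasis : of ⇑(Pi.basisFun ℝ ι) = 1 := by
    ext i j
    simp [one_apply, Pi.single_apply, eq_comm]
  have hvol : volume (ZSpan.fundamentalDomain (Pi.basisFun ℝ ι)) * 2 ^ Module.finrank ℝ (ι → ℝ)
      < volume s := by
    rw [ZSpan.volume_fundamentalDomain, hbasis, det_one, abs_one, ENNReal.ofReal_one, one_mul,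
      Module.finrank_fintype_fun_eq_card, volume_preimage_toLin'_pi_Ioo S hS ha,
      ← ENNReal.ofReal_ofNat 2, ← ENNReal.ofReal_pow zero_le_two,
      ENNReal.ofReal_lt_ofReal_iff (by positivity), mul_pow, lt_div_iff₀ (abs_pos.mpr hS)]
    gcongr
  obtain ⟨x, hx0, hxs⟩ := exists_ne_zero_mem_lattice_of_measure_mul_two_pow_lt_measure
    (ZSpan.isAddFundamentalDomain' (Pi.basisFun ℝ ι) volume) hsymm hconv hvol
  have hint : ∀ i, ∃ z : ℤ, (z : ℝ) = (x : ι → ℝ) i := fun i => by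
    simpa using ((Pi.basisFun ℝ ι).mem_span_iff_repr_mem ℤ (x : ι → ℝ)).mp x.2 i
  choose z hz using hint
  have hxz : (x : ι → ℝ) = fun j => (z j : ℝ) := funext fun j => (hz j).symm
  refine ⟨z, fun h => hx0 ?_, fun i => ?_⟩
  · ext j
    simp [hxz, h]
  · simp only [s, hxz, Set.mem_preimage, Set.mem_pi, Set.mem_univ, Set.mem_Ioo, forall_const,
      toLin'_apply] at hxs
    exact abs_lt.mpr (hxs i)

open scoped MatrixOrder in
theorem PosDef.div_card_pow_le_det {Γ : Matrix ι ι ℝ} (hΓ : Γ.PosDef) {R : ℝ} (hR : 0 ≤ R)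
    (hmin : ∀ z : ι → ℤ, z ≠ 0 → R ≤ (fun i => (z i : ℝ)) ⬝ᵥ Γ *ᵥ fun i => (z i : ℝ)) :
    (R / Fintype.card ι) ^ Fintype.card ι ≤ Γ.det := by
  set N := Fintype.card ι
  by_contra! hlt
  rcases isEmpty_or_nonempty ι with hι | hι
  · simp [N] at hlt
  have hRN : 0 < R / N := by
    refine lt_of_le_of_ne (by positivity) fun h => ?_
    have := hΓ.det_pos.trans hlt
    rw [← h, zero_pow Fintype.card_ne_zero] at this
    exact lt_irrefl 0 this
  obtain ⟨S, rfl⟩ := CStarAlgebra.nonneg_iff_eq_star_mul_self.mp hΓ.posSemidef.nonneg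
  rw [star_eq_conjTranspose, conjTranspose_eq_transpose_of_trivial] at hΓ hlt hmin
  have hdet : (Sᵀ * S).det = S.det ^ 2 := by rw [det_mul, det_transpose, sq]
  set a := √(R / N)
  have ha : 0 < a := Real.sqrt_pos.mpr hRN
  have hSdet : S.det ≠ 0 := fun h => by
    have := hΓ.det_pos
    rw [hdet, h] at this
    simp at this
  have habs : |S.det| < a ^ N := by
    refine abs_lt_of_sq_lt_sq ?_ (by positivity)
    rwa [← pow_mul, mul_comm, pow_mul, Real.sq_sqrt hRN.le, ← hdet]
  obtain ⟨z, hz0, hz⟩ := S.exists_int_ne_zero_forall_abs_mulVec_lt hSdet ha habs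
  have hlt' : (S *ᵥ fun j => (z j : ℝ)) ⬝ᵥ (S *ᵥ fun j => (z j : ℝ)) < R := calc
    _ = ∑ i, (S *ᵥ fun j => (z j : ℝ)) i ^ 2 := by simp only [dotProduct, sq]
    _ < ∑ _i : ι, a ^ 2 := sum_lt_sum_of_nonempty univ_nonempty fun i _ =>
      sq_lt_sq' (abs_lt.mp (hz i)).1 (abs_lt.mp (hz i)).2
    _ = R := by
      rw [sum_const, card_univ, nsmul_eq_mul, Real.sq_sqrt hRN.le, mul_div_cancel₀]
      exact (Nat.cast_pos.mpr Fintype.card_pos).ne'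
  have := hmin z hz0
  rw [dotProduct_transpose_mul_self_mulVec] at this
  linarith

theorem PosDef.mul_le_card_mul_trace_mul [Nonempty ι] {Γ S : Matrix ι ι ℝ} (hΓ : Γ.PosDef)
    (hS : S.PosDef) {R R' : ℝ} (hR : 0 ≤ R) (hR' : 0 ≤ R')
    (hΓmin : ∀ z : ι → ℤ, z ≠ 0 → R ≤ (fun i => (z i : ℝ)) ⬝ᵥ Γ *ᵥ fun i => (z i : ℝ))
    (hSmin : ∀ z : ι → ℤ, z ≠ 0 → R' ≤ (fun i => (z i : ℝ)) ⬝ᵥ S *ᵥ fun i => (z i : ℝ)) :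
    R * R' ≤ Fintype.card ι * (Γ * S).trace := by
  set N := Fintype.card ι
  have hN : (0 : ℝ) < N := Nat.cast_pos.mpr Fintype.card_pos
  have hpow : (R / N * (R' / N)) ^ N ≤ ((Γ * S).trace / N) ^ N := calc
    _ = (R / N) ^ N * (R' / N) ^ N := mul_pow _ _ _
    _ ≤ Γ.det * S.det := mul_le_mul (hΓ.div_card_pow_le_det hR hΓmin)
        (hS.div_card_pow_le_det hR' hSmin) (pow_nonneg (div_nonneg hR' hN.le) _) hΓ.det_pos.le
    _ ≤ _ := hΓ.posSemidef.det_mul_det_le_trace_mul_div_card_pow hS.posSemidef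
  have htr := hΓ.posSemidef.trace_mul_nonneg hS.posSemidef
  have := le_of_pow_le_pow_left₀ Fintype.card_ne_zero (by positivity) hpow
  rw [div_mul_div_comm, div_le_div_iff₀ (by positivity) hN] at this
  nlinarith

end PositiveDefinite

section IntegerMatrices

variable [Fintype κ]

theorem rank_le_card_nonzero_rows [Fintype ι] [DecidableEq ι] {R : Type*} [CommRing R]
    [StrongRankCondition R] [DecidableEq R] (C : Matrix ι κ R) :
    C.rank ≤ #{i | C.row i ≠ 0} := by
  let E : Matrix ι {i // C.row i ≠ 0} R := (1 : Matrix ι ι R).submatrix id Subtype.val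
  let F : Matrix {i // C.row i ≠ 0} κ R := C.submatrix Subtype.val id
  have hC : E * F = C := by
    ext i l
    rw [mul_apply]
    simp only [E, F, submatrix_apply, id, one_apply]
    by_cases hi : C.row i = 0
    · rw [show C i l = 0 from congrFun hi l]
      refine sum_eq_zero fun t _ => ?_
      split_ifs with h
      · rw [← h, one_mul]
        exact congrFun hi l
      · rw [zero_mul]
    · rw [sum_eq_single ⟨i, hi⟩] <;> aesop
  calc C.rank = (E * F).rank := by rw [hC]
    _ ≤ F.rank := rank_mul_le_right _ _
    _ ≤ #{i | C.row i ≠ 0} := (rank_le_card_height _).trans_eq (Fintype.card_subtype _)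

theorem card_support_mulVec_le_card_nonzero_rows [Fintype ι] {R : Type*}
    [NonUnitalNonAssocSemiring R] [DecidableEq R] (C : Matrix ι κ R) (z : κ → R) :
    #{i | (C *ᵥ z) i ≠ 0} ≤ #{i | C.row i ≠ 0} := by
  refine card_le_card fun i => ?_
  simp only [mem_filter, mem_univ, true_and]
  intro h hC
  exact h (by simp [mulVec, ← row_apply, hC])

theorem exists_rank_factorization [DecidableEq κ] {R : Type*} [CommRing R] [IsDomain R]
    [IsPrincipalIdealRing R] (C : Matrix ι κ R) :
    ∃ (G : Matrix ι (Fin C.rank) R) (A : Matrix (Fin C.rank) κ R),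
      G * A = C ∧ Injective G.mulVec ∧ Surjective A.mulVec := by
  let b : Module.Basis (Fin C.rank) R (LinearMap.range C.mulVecLin) :=
    Module.finBasisOfFinrankEq R _ rfl
  let g := (LinearMap.range C.mulVecLin).subtype ∘ₗ b.equivFun.symm.toLinearMap
  let a := b.equivFun.toLinearMap ∘ₗ C.mulVecLin.rangeRestrict
  have hG : (LinearMap.toMatrix' g).mulVec = g := by
    rw [← coe_mulVecLin, ← toLin'_apply', toLin'_toMatrix']
  have hA : (LinearMap.toMatrix' a).mulVec = a := by
    rw [← coe_mulVecLin, ← toLin'_apply', toLin'_toMatrix']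
  refine ⟨LinearMap.toMatrix' g, LinearMap.toMatrix' a, ?_, ?_, ?_⟩
  · have hga : g ∘ₗ a = C.mulVecLin := LinearMap.ext fun x => by simp [g, a]
    rw [← LinearMap.toMatrix'_comp, hga, ← toLin'_apply', LinearMap.toMatrix'_toLin']
  · rw [hG]
    exact Subtype.val_injective.comp b.equivFun.symm.injective
  · rw [hA]
    exact b.equivFun.surjective.comp C.mulVecLin.surjective_rangeRestrict

theorem map_intCast_mulVec (G : Matrix ι κ ℤ) (z : κ → ℤ) :
    G.map (Int.cast : ℤ → ℝ) *ᵥ (fun j => (z j : ℝ)) = fun i => ((G *ᵥ z) i : ℝ) :=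
  funext fun i => (RingHom.map_mulVec (Int.castRingHom ℝ) G z i).symm

theorem mulVec_intCast_ne_zero {B : Matrix ι κ ℝ} (hB : Injective B.mulVec) {x : κ → ℤ}
    (hx : x ≠ 0) : B *ᵥ (fun j => (x j : ℝ)) ≠ 0 := by
  refine fun h => hx (funext fun j => ?_)
  simpa using congrFun (hB (h.trans (mulVec_zero B).symm)) j

theorem injective_mulVec_map_intCast [Fintype ι] [DecidableEq κ] {G : Matrix ι κ ℤ}
    (hG : Injective G.mulVec) : Injective (G.map (Int.cast : ℤ → ℝ)).mulVec := by
  have hdet : (Gᵀ * G).det ≠ 0 := fun h => by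
    obtain ⟨v, hv, hGv⟩ := exists_mulVec_eq_zero_iff.mpr h
    rw [← conjTranspose_eq_transpose_of_trivial, conjTranspose_mul_self_mulVec_eq_zero] at hGv
    exact hv (hG (hGv.trans (mulVec_zero G).symm))
  have hdet' : ((G.map (Int.cast : ℤ → ℝ))ᵀ * G.map (Int.cast : ℤ → ℝ)).det ≠ 0 := by
    have hmap : (G.map (Int.cast : ℤ → ℝ))ᵀ * G.map (Int.cast : ℤ → ℝ) =
        (Int.castRingHom ℝ).mapMatrix (Gᵀ * G) := by
      rw [← transpose_map]
      exact (Matrix.map_mul (f := Int.castRingHom ℝ)).symm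
    rw [hmap, ← RingHom.map_det]
    exact Int.cast_ne_zero.mpr hdet
  intro v w hvw
  refine mulVec_injective_iff_isUnit.mpr
    ((isUnit_iff_isUnit_det _).mpr (isUnit_iff_ne_zero.mpr hdet')) ?_
  simp only [← mulVec_mulVec, hvw]

theorem injective_mulVec_transpose_of_surjective [Fintype ι] {A : Matrix ι κ ℤ}
    (hA : Surjective A.mulVec) : Injective Aᵀ.mulVec := by
  rw [← coe_mulVecLin]
  refine (injective_iff_map_eq_zero _).mpr fun z hz => ?_
  obtain ⟨c, rfl⟩ := hA z
  rw [mulVecLin_apply] at hz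
  refine dotProduct_self_eq_zero.mp ?_
  rw [dotProduct_mulVec, ← mulVec_transpose, hz, zero_dotProduct]

end IntegerMatrices

end Matrix

section LambdaOne

variable {n m : Type} [Fintype n] [Fintype m] {B : Matrix n m ℝ}

theorem lambdaOne_nonneg (B : Matrix n m ℝ) : 0 ≤ lambdaOne 2 B :=
  Real.sInf_nonneg <| by
    rintro _ ⟨x, -, rfl⟩
    exact norm_nonneg _

theorem lambdaOne_zero (p : ℝ≥0∞) : lambdaOne p (0 : Matrix n m ℝ) = 0 := by
  simp [lambdaOne]

theorem norm_withLp_equiv_symm_eq_sqrt (v : n → ℝ) :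
    ‖(WithLp.equiv 2 (n → ℝ)).symm v‖ = √(v ⬝ᵥ v) := by
  rw [EuclideanSpace.norm_eq]
  simp [dotProduct, sq]

theorem sq_lambdaOne_le {x : m → ℤ} (hx : B *ᵥ (fun j => (x j : ℝ)) ≠ 0) :
    lambdaOne 2 B ^ 2 ≤ (B *ᵥ fun j => (x j : ℝ)) ⬝ᵥ (B *ᵥ fun j => (x j : ℝ)) := by
  have h : lambdaOne 2 B ≤ √((B *ᵥ fun j => (x j : ℝ)) ⬝ᵥ (B *ᵥ fun j => (x j : ℝ))) := by
    refine csInf_le ⟨0, ?_⟩ ⟨x, hx, (norm_withLp_equiv_symm_eq_sqrt _).symm⟩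
    rintro _ ⟨y, -, rfl⟩
    exact norm_nonneg _
  exact (Real.le_sqrt (lambdaOne_nonneg B) (dotProduct_self_nonneg _)).mp h

theorem le_lambdaOne {c : ℝ} (hc : 0 ≤ c) (hB : ∃ x : m → ℤ, B *ᵥ (fun j => (x j : ℝ)) ≠ 0)
    (h : ∀ x : m → ℤ, B *ᵥ (fun j => (x j : ℝ)) ≠ 0 →
      c ^ 2 ≤ (B *ᵥ fun j => (x j : ℝ)) ⬝ᵥ (B *ᵥ fun j => (x j : ℝ))) :
    c ≤ lambdaOne 2 B := by
  obtain ⟨x₀, hx₀⟩ := hB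
  refine le_csInf ⟨_, x₀, hx₀, rfl⟩ ?_
  rintro _ ⟨x, hx, rfl⟩
  rw [norm_withLp_equiv_symm_eq_sqrt]
  exact (Real.le_sqrt hc (dotProduct_self_nonneg _)).mpr (h x hx)

variable {ι : Type} [Fintype ι]

theorem sum_dotProduct_mulVec_row_eq (C : Matrix ι m ℝ) :
    ∑ i, (B *ᵥ C i) ⬝ᵥ (B *ᵥ C i) = vec (B * Cᵀ) ⬝ᵥ vec (B * Cᵀ) := by
  simp only [dotProduct, vec, Fintype.sum_prod_type]
  rfl

theorem card_nonzero_rows_mul_sq_le (hB : Injective B.mulVec) {C : Matrix ι m ℤ} {k : ℤ}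
    (hk : ∀ i l, k ∣ C i l) :
    #{i | C.row i ≠ 0} * (k : ℝ) ^ 2 * lambdaOne 2 B ^ 2 ≤
      vec (B * (C.map (Int.cast : ℤ → ℝ))ᵀ) ⬝ᵥ vec (B * (C.map (Int.cast : ℤ → ℝ))ᵀ) := by
  have hrow : ∀ i, C.row i ≠ 0 → (k : ℝ) ^ 2 * lambdaOne 2 B ^ 2 ≤
      (B *ᵥ C.map (Int.cast : ℤ → ℝ) i) ⬝ᵥ (B *ᵥ C.map (Int.cast : ℤ → ℝ) i) := by
    intro i hi
    choose r hr using hk i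
    have hr0 : r ≠ 0 := fun h => hi (funext fun l => by simp [hr l, h])
    have hCi : B *ᵥ C.map (Int.cast : ℤ → ℝ) i = (k : ℝ) • B *ᵥ fun l => (r l : ℝ) := by
      rw [← mulVec_smul]
      congr 1
      ext l
      simp [hr l]
    rw [hCi, smul_dotProduct, dotProduct_smul, smul_eq_mul, smul_eq_mul, ← mul_assoc, ← sq]
    exact mul_le_mul_of_nonneg_left (sq_lambdaOne_le (mulVec_intCast_ne_zero hB hr0))
      (sq_nonneg _)
  rw [← sum_dotProduct_mulVec_row_eq, mul_assoc, ← nsmul_eq_mul]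
  refine (card_nsmul_le_sum _ _ _ fun i hi => hrow i (mem_filter.mp hi).2).trans ?_
  exact sum_le_sum_of_subset_of_nonneg (subset_univ _) fun i _ _ => dotProduct_self_nonneg _

theorem vec_mul_transpose_dotProduct_eq_trace {ρ : Type} [Fintype ρ] (G : Matrix ι ρ ℝ)
    (A : Matrix ρ m ℝ) :
    vec (B * (G * A)ᵀ) ⬝ᵥ vec (B * (G * A)ᵀ) = (Gᵀ * G * ((B * Aᵀ)ᵀ * (B * Aᵀ))).trace := by
  rw [transpose_mul, ← Matrix.mul_assoc, vec_dotProduct_vec, transpose_mul, transpose_transpose]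
  calc (G * (B * Aᵀ)ᵀ * (B * Aᵀ * Gᵀ)).trace
      = (G * ((B * Aᵀ)ᵀ * (B * Aᵀ) * Gᵀ)).trace := by simp only [Matrix.mul_assoc]
    _ = ((B * Aᵀ)ᵀ * (B * Aᵀ) * (Gᵀ * G)).trace := by rw [trace_mul_comm, Matrix.mul_assoc]
    _ = _ := trace_mul_comm _ _

theorem mul_sq_lambdaOne_le_rank_mul (hB : Injective B.mulVec) {C : Matrix ι m ℤ} (hC : C ≠ 0)
    {R : ℝ} (hR : 0 ≤ R) (hmin : ∀ z : m → ℤ, C *ᵥ z ≠ 0 →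
      R ≤ (fun i => ((C *ᵥ z) i : ℝ)) ⬝ᵥ (fun i => ((C *ᵥ z) i : ℝ))) :
    R * lambdaOne 2 B ^ 2 ≤
      C.rank * vec (B * (C.map (Int.cast : ℤ → ℝ))ᵀ) ⬝ᵥ vec (B * (C.map (Int.cast : ℤ → ℝ))ᵀ) := by
  classical
  obtain ⟨G, A, hGA, hG, hA⟩ := C.exists_rank_factorization
  have : Nonempty (Fin C.rank) := by
    refine Fin.pos_iff_nonempty.mp (Nat.pos_of_ne_zero fun h => hC ?_)
    have : IsEmpty (Fin C.rank) := by rw [h]; infer_instance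
    rw [← hGA]
    ext i l
    simp [mul_apply]
  set Gr := G.map (Int.cast : ℤ → ℝ)
  set Ar := A.map (Int.cast : ℤ → ℝ)
  set W := B * Arᵀ
  have hW : Injective W.mulVec := by
    have hAr : Injective Arᵀ.mulVec := by
      simpa only [Ar, transpose_map] using
        injective_mulVec_map_intCast (injective_mulVec_transpose_of_surjective hA)
    intro v w hvw
    exact hAr (hB (by simpa only [W, ← mulVec_mulVec] using hvw))
  have hGmin : ∀ z : Fin C.rank → ℤ, z ≠ 0 →
      R ≤ (fun i => (z i : ℝ)) ⬝ᵥ (Grᵀ * Gr) *ᵥ fun i => (z i : ℝ) := by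
    intro z hz
    obtain ⟨c, rfl⟩ := hA z
    rw [dotProduct_transpose_mul_self_mulVec, map_intCast_mulVec, mulVec_mulVec, hGA]
    refine hmin c ?_
    rw [← hGA, ← mulVec_mulVec]
    exact fun h => hz (hG (h.trans (mulVec_zero G).symm))
  have hWmin : ∀ z : Fin C.rank → ℤ, z ≠ 0 →
      lambdaOne 2 B ^ 2 ≤ (fun i => (z i : ℝ)) ⬝ᵥ (Wᵀ * W) *ᵥ fun i => (z i : ℝ) := by
    intro z hz
    have hWz : W *ᵥ (fun i => (z i : ℝ)) = B *ᵥ fun l => ((Aᵀ *ᵥ z) l : ℝ) := by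
      rw [← map_intCast_mulVec, ← mulVec_mulVec, transpose_map]
    rw [dotProduct_transpose_mul_self_mulVec, hWz]
    exact sq_lambdaOne_le (hWz ▸ mulVec_intCast_ne_zero hW hz)
  have hCr : C.map (Int.cast : ℤ → ℝ) = Gr * Ar :=
    (congrArg (·.map (Int.cast : ℤ → ℝ)) hGA).symm.trans (Matrix.map_mul (f := Int.castRingHom ℝ))
  have := (posDef_transpose_mul_self (injective_mulVec_map_intCast hG)).mul_le_card_mul_trace_mul
    (posDef_transpose_mul_self hW) hR (sq_nonneg _) hGmin hWmin
  rwa [Fintype.card_fin, ← vec_mul_transpose_dotProduct_eq_trace, ← hCr] at this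

end LambdaOne

section NoInstance

variable {ι κ : Type} [Fintype ι] {d : ℕ}

def NoInstanceCondition (d : ℕ) (v : ι → ℤ) : Prop :=
  d ≤ #{i | v i ≠ 0} ∨
    ((∀ i, Even (v i)) ∧ (d : ℝ) / 4 ≤ (#{i | v i ≠ 0} : ℝ)) ∨
    ((∀ i, Even (v i)) ∧ (d : ℝ) ≤ √(∑ i, (v i : ℝ) ^ 2))

theorem NoInstanceCondition.even {v : ι → ℤ} (h : NoInstanceCondition d v)
    (hv : #{i | v i ≠ 0} < d) (i : ι) : Even (v i) := by
  rcases h with h | ⟨h, -⟩ | ⟨h, -⟩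
  · exact absurd h hv.not_ge
  all_goals exact h i

theorem NoInstanceCondition.sq_le_dotProduct {v : ι → ℤ} (h : NoInstanceCondition d v)
    (hv : 4 * #{i | v i ≠ 0} < d) :
    (d : ℝ) ^ 2 ≤ (fun i => (v i : ℝ)) ⬝ᵥ (fun i => (v i : ℝ)) := by
  have hv' : 4 * (#{i | v i ≠ 0} : ℝ) < d := by exact_mod_cast hv
  rcases h with h | ⟨-, h⟩ | ⟨-, h⟩
  · omega
  · linarith
  · rw [Real.le_sqrt (Nat.cast_nonneg _) (by positivity)] at h
    simpa only [dotProduct, sq] using h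

variable [Fintype κ]

theorem two_dvd_of_noInstanceCondition {C : Matrix ι κ ℤ}
    (hC : ∀ z, C *ᵥ z ≠ 0 → NoInstanceCondition d (C *ᵥ z)) (ht : #{i | C.row i ≠ 0} < d)
    (i : ι) (l : κ) : 2 ∣ C i l := by
  classical
  have hcol : C *ᵥ Pi.single l 1 = fun i => C i l := mulVec_single_one C l
  by_cases h0 : C *ᵥ Pi.single l 1 = 0
  · rw [show C i l = 0 from congrFun (hcol.symm.trans h0) i]
    exact dvd_zero 2
  · rw [← even_iff_two_dvd, show C i l = (C *ᵥ Pi.single l 1) i by rw [hcol]]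
    exact (hC _ h0).even ((card_support_mulVec_le_card_nonzero_rows C _).trans_lt ht) i

theorem mul_sq_lambdaOne_le_of_noInstanceCondition {n : Type} [Fintype n] {B : Matrix n κ ℝ}
    (hB : Injective B.mulVec) {C : Matrix ι κ ℤ} (hC0 : C ≠ 0)
    (hC : ∀ z, C *ᵥ z ≠ 0 → NoInstanceCondition d (C *ᵥ z)) :
    d * lambdaOne 2 B ^ 2 ≤
      vec (B * (C.map (Int.cast : ℤ → ℝ))ᵀ) ⬝ᵥ vec (B * (C.map (Int.cast : ℤ → ℝ))ᵀ) := by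
  classical
  set t := #{i | C.row i ≠ 0}
  have hlam := sq_nonneg (lambdaOne 2 B)
  rcases le_or_gt d t with hdt | hdt
  · refine le_trans ?_ (card_nonzero_rows_mul_sq_le hB (k := 1) fun _ _ => one_dvd _)
    rw [Int.cast_one, one_pow, mul_one]
    exact mul_le_mul_of_nonneg_right (by exact_mod_cast hdt) hlam
  rcases le_or_gt d (4 * t) with hdt' | hdt'
  · refine le_trans ?_ (card_nonzero_rows_mul_sq_le hB (two_dvd_of_noInstanceCondition hC hdt))
    refine mul_le_mul_of_nonneg_right ?_ hlam
    push_cast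
    exact_mod_cast (by omega : d ≤ t * 2 ^ 2)
  have hmain := mul_sq_lambdaOne_le_rank_mul hB hC0 (sq_nonneg (d : ℝ)) fun z hz =>
    (hC z hz).sq_le_dotProduct
      ((Nat.mul_le_mul_left 4 (card_support_mulVec_le_card_nonzero_rows C z)).trans_lt hdt')
  have hrank : (C.rank : ℝ) ≤ t := by exact_mod_cast C.rank_le_card_nonzero_rows
  have htd : 4 * (t : ℝ) < d := by exact_mod_cast hdt'
  have hQ := dotProduct_self_nonneg (vec (B * (C.map (Int.cast : ℤ → ℝ))ᵀ))
  nlinarith [mul_le_mul_of_nonneg_right hrank hQ]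

end NoInstance

section Kronecker

variable {n m₁ n₂ m₂ : Type} [Fintype m₁] [Fintype m₂]

theorem kronecker_mulVec_eq_vec (B₁ : Matrix n m₁ ℤ) (B₂ : Matrix n₂ m₂ ℝ) (x : m₁ × m₂ → ℤ) :
    (B₁.map (fun a => (a : ℝ)) ⊗ₖ B₂) *ᵥ (fun p => (x p : ℝ)) =
      vec (B₂ * ((B₁ * of (curry x)).map (Int.cast : ℤ → ℝ))ᵀ) := by
  have hx : (fun p => (x p : ℝ)) = vec ((of (curry x)).map (Int.cast : ℤ → ℝ))ᵀ := rfl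
  rw [hx, kronecker_mulVec_vec]
  simp only [← Int.coe_castRingHom, Matrix.map_mul, transpose_mul, Matrix.mul_assoc]

theorem exists_kronecker_mulVec_ne_zero [DecidableEq m₁] [DecidableEq m₂] {B₁ : Matrix n m₁ ℤ}
    {B₂ : Matrix n₂ m₂ ℝ} (h₁ : B₁ ≠ 0) (h₂ : B₂ ≠ 0) :
    ∃ x : m₁ × m₂ → ℤ, (B₁.map (fun a => (a : ℝ)) ⊗ₖ B₂) *ᵥ (fun p => (x p : ℝ)) ≠ 0 := by
  obtain ⟨i, k, hik⟩ : ∃ i k, B₁ i k ≠ 0 := by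
    by_contra! h
    exact h₁ (ext h)
  obtain ⟨j, l, hjl⟩ : ∃ j l, B₂ j l ≠ 0 := by
    by_contra! h
    exact h₂ (ext h)
  have hsingle : (fun p => ((Pi.single (k, l) 1 : m₁ × m₂ → ℤ) p : ℝ)) = Pi.single (k, l) 1 := by
    ext p
    by_cases hp : p = (k, l) <;> simp [hp]
  refine ⟨Pi.single (k, l) 1, fun h => ?_⟩
  rw [hsingle, mulVec_single_one] at h
  exact mul_ne_zero (Int.cast_ne_zero.mpr hik) hjl (congrFun h (i, j))

end Kronecker

theorem lambdaOne_tensor_no_instance_general {n m₁ n₂ m₂ : ℕ} (d : ℕ)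
    (hm₁ : 0 < m₁)
    (B₁ : Matrix (Fin n) (Fin m₁) ℤ) (h₁ : LinearIndependent ℤ B₁.transpose)
    (hNO : ∀ x : Fin m₁ → ℤ, B₁.mulVec x ≠ 0 →
      d ≤ (Finset.univ.filter fun i => B₁.mulVec x i ≠ 0).card ∨
      ((∀ i, Even (B₁.mulVec x i)) ∧
        (d : ℝ) / 4 ≤ ((Finset.univ.filter fun i => B₁.mulVec x i ≠ 0).card : ℝ)) ∨
      ((∀ i, Even (B₁.mulVec x i)) ∧
        (d : ℝ) ≤ Real.sqrt (∑ i, ((B₁.mulVec x i : ℝ)) ^ 2)))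
    (B₂ : Matrix (Fin n₂) (Fin m₂) ℝ) (h₂ : LinearIndependent ℝ B₂.transpose) :
    Real.sqrt d * lambdaOne 2 B₂ ≤
      lambdaOne 2 ((B₁.map (fun a => (a : ℝ))) ⊗ₖ B₂) := by
  rcases eq_or_ne B₂ 0 with rfl | hB₂0
  · rw [lambdaOne_zero, mul_zero]
    exact lambdaOne_nonneg _
  have hB₁0 : B₁ ≠ 0 := fun h => h₁.ne_zero ⟨0, hm₁⟩ (by rw [h, transpose_zero]; rfl)
  refine le_lambdaOne (mul_nonneg (Real.sqrt_nonneg _) (lambdaOne_nonneg _))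
    (exists_kronecker_mulVec_ne_zero hB₁0 hB₂0) fun x hx => ?_
  rw [kronecker_mulVec_eq_vec] at hx ⊢
  rw [mul_pow, Real.sq_sqrt (Nat.cast_nonneg d)]
  refine mul_sq_lambdaOne_le_of_noInstanceCondition (mulVec_injective_iff.mpr h₂)
    (fun h => hx (by simp [h])) fun z hz => ?_
  rw [← mulVec_mulVec] at hz ⊢
  exact hNO _ hz

theorem lambdaOne_tensor_no_instance {n m₁ n₂ m₂ : ℕ} (d : ℕ)
    (hm₁ : 0 < m₁) (hm₂ : 0 < m₂)
    (B₁ : Matrix (Fin n) (Fin m₁) ℤ) (h₁ : LinearIndependent ℤ B₁.transpose)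
    (hNO : ∀ x : Fin m₁ → ℤ, B₁.mulVec x ≠ 0 →
      d ≤ (Finset.univ.filter fun i => B₁.mulVec x i ≠ 0).card ∨
      ((∀ i, Even (B₁.mulVec x i)) ∧
        (d : ℝ) / 4 ≤ ((Finset.univ.filter fun i => B₁.mulVec x i ≠ 0).card : ℝ)) ∨
      ((∀ i, Even (B₁.mulVec x i)) ∧
        (d : ℝ) ≤ Real.sqrt (∑ i, ((B₁.mulVec x i : ℝ)) ^ 2)))
    (B₂ : Matrix (Fin n₂) (Fin m₂) ℝ) (h₂ : LinearIndependent ℝ B₂.transpose) :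
    Real.sqrt d * lambdaOne 2 B₂ ≤
      lambdaOne 2 ((B₁.map (fun a => (a : ℝ))) ⊗ₖ B₂) :=
  lambdaOne_tensor_no_instance_general d hm₁ B₁ h₁ hNO B₂ h₂
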